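/- In the causal model M whose endogenous variables are 2n+1 binary pixel variables X₁, X₂, …, X_{2n+1} set directly by the exogenous context (every pixel-value assignment being realized by some context) together with an output variable O whose equation gives O = 0 iff either X₁ = 0 and the number of zeros among X₂,…,X_{2n+1} is even (possibly 0), or X₁ = 1 and the number of zeros among X₂,…,X_{2n+1} is even and positive: for every context u⃗ in which X₁ = 0, O = 0, and the number of zeros among X₂,…,X_{2n+1} is positive, there is no (possibly empty) conjunction Y⃗=y⃗ of assignments to pixel variables other than X₁ such that X₁=0 ∧ Y⃗=y⃗ is an actual cause of O=0 in (M,u⃗). In particular, X₁=0 by itself is not an actual cause of O=0 in any such context, and for any single pixel Y among X₂,…,X_{2n+1} with actual value y in u⃗, Y=y is an actual (but-for) cause of O=0 in (M,u⃗). -/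

import Mathlib

open Classical

/-- A recursive causal model: `C` is the type of contexts (settings of the exogenous
variables), `V` the type of endogenous variables, `Val` the type of values.
`F X c g` is the structural equation for `X`, given the context `c` and the values `g`
of the other endogenous variables.  Recursiveness (acyclicity) is captured by the
requirement that under every intervention (a partial assignment `I` of values to
endogenous variables, whose equations are replaced by the given constants) and every
context there is a unique solution of the equations. -/
structure CausalModel (C V Val : Type) where
  F : V → C → (V → Val) → Val
  unique_sol : ∀ (I : V → Option Val) (c : C),
    ∃! g : V → Val, ∀ X : V, g X = (I X).getD (F X c g)

namespace CausalModel

variable {C V Val : Type}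

/-- The unique solution of the model under intervention `I` in context `c`. -/
noncomputable def sol (M : CausalModel C V Val) (I : V → Option Val) (c : C) : V → Val :=
  (M.unique_sol I c).choose

/-- The actual values of the endogenous variables in context `c` (no intervention). -/
noncomputable def actVal (M : CausalModel C V Val) (c : C) : V → Val :=
  M.sol (fun _ => none) c

/-- The intervention `A ← x` setting the variables in `A` to the values given by `x`. -/
def interv [DecidableEq V] (A : Finset V) (x : V → Val) : V → Option Val :=
  fun X => if X ∈ A then some (x X) else none

/-- AC2 for the set `A` with the fixed alternative setting `x'`: there are a set `W` of
endogenous variables disjoint from `A` and values `w` that the variables in `W` take in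
the actual setting such that `(M,c) ⊨ [A ← x', W ← w] ¬φ`. -/
def AC2At [DecidableEq V] (M : CausalModel C V Val) (c : C)
    (A : Finset V) (x' : V → Val) (φ : (V → Val) → Prop) : Prop :=
  ∃ (W : Finset V) (w : V → Val),
    Disjoint A W ∧ (∀ Z ∈ W, M.actVal c Z = w Z) ∧
    ¬ φ (M.sol (interv (A ∪ W) (fun Z => if Z ∈ A then x' Z else w Z)) c)

/-- `A = x` is an actual cause of `φ` in `(M,c)`: AC1, AC2 and AC3 (minimality of `A`
with respect to the witnessing setting `x'`). -/
def IsActualCause [DecidableEq V] (M : CausalModel C V Val) (c : C)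
    (A : Finset V) (x : V → Val) (φ : (V → Val) → Prop) : Prop :=
  (∀ X ∈ A, M.actVal c X = x X) ∧ φ (M.actVal c) ∧
  ∃ x' : V → Val, AC2At M c A x' φ ∧ ∀ B : Finset V, B ⊂ A → ¬ AC2At M c B x' φ

/-- A but-for cause: an actual cause for which AC2 is witnessed with `W = ∅`. -/
def IsButForCause [DecidableEq V] (M : CausalModel C V Val) (c : C)
    (A : Finset V) (x : V → Val) (φ : (V → Val) → Prop) : Prop :=
  (∀ X ∈ A, M.actVal c X = x X) ∧ φ (M.actVal c) ∧
  ∃ x' : V → Val, ¬ φ (M.sol (interv A x') c) ∧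
    ∀ B : Finset V, B ⊂ A → ¬ AC2At M c B x' φ

/-- SC1: `(M,c) ⊨ (A = x) ∧ φ`.  (This is also the satisfaction of `A = x ∧ φ`.) -/
def SC1 (M : CausalModel C V Val) (c : C) (A : Finset V) (x : V → Val)
    (φ : (V → Val) → Prop) : Prop :=
  (∀ X ∈ A, M.actVal c X = x X) ∧ φ (M.actVal c)

/-- SC2: some conjunct `X = x X` of `A = x` is part of an actual cause of `φ` in `(M,c)`:
there is a (possibly empty) conjunction `Y = y` such that `X = x X ∧ Y = y` is an actual
cause of `φ` in `(M,c)`. -/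
def SC2 [DecidableEq V] (M : CausalModel C V Val) (c : C) (A : Finset V)
    (x : V → Val) (φ : (V → Val) → Prop) : Prop :=
  ∃ X ∈ A, ∃ (Y : Finset V) (y : V → Val), X ∉ Y ∧
    IsActualCause M c (insert X Y) (Function.update y X (x X)) φ

/-- SC3: `(M,c') ⊨ [A ← x] φ` for all contexts `c'`. -/
def SC3 [DecidableEq V] (M : CausalModel C V Val) (A : Finset V) (x : V → Val)
    (φ : (V → Val) → Prop) : Prop :=
  ∀ c' : C, φ (M.sol (interv A x) c')

/-- SC4: minimality; no strict subset of `A` (with `x` restricted) satisfies SC1, SC2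
and SC3. -/
def SC4 [DecidableEq V] (M : CausalModel C V Val) (c : C) (A : Finset V)
    (x : V → Val) (φ : (V → Val) → Prop) : Prop :=
  ∀ B : Finset V, B ⊂ A → ¬ (SC1 M c B x φ ∧ SC2 M c B x φ ∧ SC3 M B x φ)

/-- `A = x` is a sufficient cause of `φ` in `(M,c)`. -/
def IsSufficientCause [DecidableEq V] (M : CausalModel C V Val) (c : C)
    (A : Finset V) (x : V → Val) (φ : (V → Val) → Prop) : Prop :=
  SC1 M c A x φ ∧ SC2 M c A x φ ∧ SC3 M A x φ ∧ SC4 M c A x φ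

/-- EX1 relative to a set `K` of contexts: in every context of `K` satisfying
`(A = x) ∧ φ` some conjunct of `A = x` is part of an actual cause of `φ` (SC2), and
`(M,c') ⊨ [A ← x] φ` for all `c' ∈ K`. -/
def EX1 [DecidableEq V] (M : CausalModel C V Val) (K : Set C) (A : Finset V)
    (x : V → Val) (φ : (V → Val) → Prop) : Prop :=
  (∀ c ∈ K, SC1 M c A x φ → SC2 M c A x φ) ∧
  (∀ c ∈ K, φ (M.sol (interv A x) c))

/-- `A = x` is an explanation of `φ` relative to the set `K` of contexts: EX1,
EX2 (minimality) and EX3 (`(M,c) ⊨ (A = x) ∧ φ` for some `c ∈ K`). -/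
def IsExplanation [DecidableEq V] (M : CausalModel C V Val) (K : Set C)
    (A : Finset V) (x : V → Val) (φ : (V → Val) → Prop) : Prop :=
  EX1 M K A x φ ∧
  (∀ B : Finset V, B ⊂ A → ¬ EX1 M K B x φ) ∧
  (∃ c ∈ K, SC1 M c A x φ)

end CausalModel

open CausalModel

/-- The number of zeros among the pixels `X₂, …, X_{2n+1}` (the coordinates `i ≠ 0`) of
a pixel assignment `v : Fin (2n+1) → Bool` (with `false` playing the role of `0`). -/
def restZeroCount {m : ℕ} (v : Fin (m + 1) → Bool) : ℕ :=
  (Finset.univ.filter fun i : Fin (m + 1) => i ≠ 0 ∧ v i = false).card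

/-!
Pixels depend on the context alone, so putting a pixel into `W` at its actual value changes
nothing, and putting `O` into `W` fixes it at its actual value `0`. Hence AC2 for a set `A` of
pixels and a setting `x'` says exactly that overriding the actual pixels on `A` by `x'` gives
`O = 1`: the number of zeros among `X₂, …, X_{2n+1}` becomes odd, or `X₁ = 1` and that number
becomes `0`. If `X₁ ∈ A`, AC3 then fails: in the odd case `X₁` can be dropped from `A`, as an
odd count gives `O = 1` whatever `X₁` is; otherwise some pixel `X_j` that is actually `0` was
set to `1`, and dropping it from `A` makes the count `1`. A single pixel `X_j` with `j ≥ 2`, on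
the other hand, is a but-for cause, since flipping it makes the count odd.
-/

open Function

namespace CausalModel

variable {C V Val : Type}

theorem sol_apply (M : CausalModel C V Val) (I : V → Option Val) (c : C) (X : V) :
    M.sol I c X = (I X).getD (M.F X c (M.sol I c)) :=
  (M.unique_sol I c).choose_spec.1 X

end CausalModel

open CausalModel

section RestZeroCount

variable {m : ℕ}

theorem restZeroCount_congr {v w : Fin (m + 1) → Bool} (h : ∀ i ≠ 0, v i = w i) :
    restZeroCount v = restZeroCount w := by
  unfold restZeroCount
  congr 1
  exact Finset.filter_congr fun i _ => and_congr_right fun hi => by rw [h i hi]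

theorem restZeroCount_pos_iff {v : Fin (m + 1) → Bool} :
    0 < restZeroCount v ↔ ∃ i ≠ 0, v i = false := by
  simp [restZeroCount, Finset.card_pos, Finset.filter_nonempty_iff]

theorem restZeroCount_update_false {j : Fin (m + 1)} (hj : j ≠ 0) (v : Fin (m + 1) → Bool) :
    restZeroCount (update v j false) = restZeroCount (update v j true) + 1 := by
  unfold restZeroCount
  rw [← Finset.card_insert_of_notMem (s := Finset.univ.filter _) (a := j) (by simp)]
  congr 1
  ext i
  by_cases hij : i = j <;> simp [hij, hj]

theorem even_restZeroCount_update_not {j : Fin (m + 1)} (hj : j ≠ 0) (v : Fin (m + 1) → Bool) :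
    Even (restZeroCount (update v j !v j)) ↔ ¬ Even (restZeroCount v) := by
  conv_rhs => rw [← update_eq_self j v]
  cases v j <;> simp [restZeroCount_update_false hj, Nat.even_add_one]

end RestZeroCount

section OutputZero

variable {m : ℕ}

def OutputZero (p : Fin (m + 1) → Bool) : Prop :=
  (p 0 = false ∧ Even (restZeroCount p)) ∨
    (p 0 = true ∧ Even (restZeroCount p) ∧ 0 < restZeroCount p)

theorem OutputZero.even {p : Fin (m + 1) → Bool} (h : OutputZero p) :
    Even (restZeroCount p) := by
  rcases h with ⟨-, h⟩ | ⟨-, h, -⟩ <;> exact h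

theorem restZeroCount_eq_zero_of_not_outputZero {p : Fin (m + 1) → Bool}
    (h : ¬ OutputZero p) (he : Even (restZeroCount p)) : restZeroCount p = 0 := by
  cases hp : p 0 <;> simp_all [OutputZero]

theorem exists_not_outputZero_piecewise_diff_singleton {s : Set (Fin (m + 1))}
    [DecidablePred (· ∈ s)] {x c : Fin (m + 1) → Bool} (hc : 0 < restZeroCount c) (hs : 0 ∈ s)
    (h : ¬ OutputZero (s.piecewise x c)) :
    ∃ k ∈ s, ¬ OutputZero ((s \ {k}).piecewise x c) := by
  set p := s.piecewise x c with hp_def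
  by_cases hp : Even (restZeroCount p)
  · have hp0 := restZeroCount_eq_zero_of_not_outputZero h hp
    obtain ⟨j, hj0, hcj⟩ := restZeroCount_pos_iff.1 hc
    have hpj : p j = true := by
      by_contra hpj
      exact (restZeroCount_pos_iff.2 ⟨j, hj0, by simpa using hpj⟩).ne' hp0
    have hjs : j ∈ s := by
      by_contra hjs
      simp [hp_def, Set.piecewise_eq_of_notMem _ _ _ hjs, hcj] at hpj
    have hdiff : (s \ {j}).piecewise x c = update p j !p j := by
      ext i
      by_cases hij : i = j
      · simp [hij, hpj, hcj]
      · simp [hp_def, Set.piecewise, hij]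
    refine ⟨j, hjs, fun h' => ?_⟩
    rw [hdiff] at h'
    exact (even_restZeroCount_update_not hj0 p).1 h'.even hp
  · refine ⟨0, hs, fun h' => hp ?_⟩
    rw [← restZeroCount_congr (v := (s \ {0}).piecewise x c) fun i hi => by
      simp [hp_def, Set.piecewise, hi]]
    exact h'.even

end OutputZero

structure IsParityPixelModel {m : ℕ}
    (M : CausalModel (Fin (m + 1) → Bool) (Fin (m + 1) ⊕ Unit) Bool) : Prop where
  pixel : ∀ i c g, M.F (.inl i) c g = c i
  output : ∀ c g, M.F (.inr ()) c g = false ↔ OutputZero fun i => g (.inl i)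

namespace IsParityPixelModel

variable {m : ℕ} {M : CausalModel (Fin (m + 1) → Bool) (Fin (m + 1) ⊕ Unit) Bool}
  {c : Fin (m + 1) → Bool}

theorem sol_interv_inl (hM : IsParityPixelModel M) (A : Finset (Fin (m + 1) ⊕ Unit))
    (x : Fin (m + 1) ⊕ Unit → Bool) (i : Fin (m + 1)) :
    M.sol (interv A x) c (.inl i) = {i | .inl i ∈ A}.piecewise (x ∘ Sum.inl) c i := by
  rw [sol_apply, hM.pixel]
  by_cases hi : Sum.inl i ∈ A <;> simp [interv, Set.piecewise, hi]

theorem actVal_inl (hM : IsParityPixelModel M) (i : Fin (m + 1)) :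
    M.actVal c (.inl i) = c i := by
  rw [actVal, sol_apply, hM.pixel]
  rfl

theorem sol_interv_inr_eq_false_iff (hM : IsParityPixelModel M)
    {A : Finset (Fin (m + 1) ⊕ Unit)} (hA : .inr () ∉ A) (x : Fin (m + 1) ⊕ Unit → Bool) :
    M.sol (interv A x) c (.inr ()) = false ↔
      OutputZero ({i | .inl i ∈ A}.piecewise (x ∘ Sum.inl) c) := by
  rw [sol_apply, interv, if_neg hA, Option.getD_none, hM.output]
  simp only [hM.sol_interv_inl]

theorem actVal_inr_eq_false_iff (hM : IsParityPixelModel M) :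
    M.actVal c (.inr ()) = false ↔ OutputZero c := by
  rw [actVal, sol_apply, Option.getD_none, hM.output, ← actVal]
  simp only [hM.actVal_inl]

theorem ac2At_iff_not_outputZero (hM : IsParityPixelModel M)
    (hO : M.actVal c (.inr ()) = false) {A : Finset (Fin (m + 1) ⊕ Unit)} (hA : .inr () ∉ A)
    (x : Fin (m + 1) ⊕ Unit → Bool) :
    AC2At M c A x (fun g => g (.inr ()) = false) ↔
      ¬ OutputZero ({i | .inl i ∈ A}.piecewise (x ∘ Sum.inl) c) := by
  constructor
  · rintro ⟨W, w, -, hw, hneg⟩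
    by_cases hW : .inr () ∈ W
    · refine absurd ?_ hneg
      dsimp only
      rw [sol_apply]
      simp [interv, hW, hA, ← hw _ hW, hO]
    · dsimp only at hneg
      rw [hM.sol_interv_inr_eq_false_iff (by simp [hA, hW])] at hneg
      convert hneg using 2
      ext i
      by_cases hiA : Sum.inl i ∈ A
      · simp [Set.piecewise, hiA]
      · by_cases hiW : Sum.inl i ∈ W
        · simp [Set.piecewise, hiA, hiW, ← hw _ hiW, hM.actVal_inl]
        · simp [Set.piecewise, hiA, hiW]
  · intro h
    refine ⟨∅, x, Finset.disjoint_empty_right _, by simp, ?_⟩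
    simpa [hM.sol_interv_inr_eq_false_iff hA] using h

theorem not_isActualCause_of_inl_zero_mem (hM : IsParityPixelModel M)
    (hO : M.actVal c (.inr ()) = false) (hz : 0 < restZeroCount c)
    {A : Finset (Fin (m + 1) ⊕ Unit)} (hA : .inr () ∉ A) (h0 : .inl 0 ∈ A)
    (x : Fin (m + 1) ⊕ Unit → Bool) :
    ¬ IsActualCause M c A x (fun g => g (.inr ()) = false) := by
  rintro ⟨-, -, x', hx', hmin⟩
  rw [hM.ac2At_iff_not_outputZero hO hA] at hx'
  obtain ⟨k, hk, hk'⟩ := exists_not_outputZero_piecewise_diff_singleton hz h0 hx'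
  refine hmin (A.erase (.inl k)) (Finset.erase_ssubset hk) ?_
  rw [hM.ac2At_iff_not_outputZero hO fun h => hA (Finset.mem_of_mem_erase h)]
  convert hk' using 2
  ext i
  by_cases hik : i = k <;> simp [Set.piecewise, hik]

theorem isButForCause_inl (hM : IsParityPixelModel M) (hO : M.actVal c (.inr ()) = false)
    {i : Fin (m + 1)} (hi : i ≠ 0) :
    IsButForCause M c {.inl i} (M.actVal c) (fun g => g (.inr ()) = false) := by
  have hc := hM.actVal_inr_eq_false_iff.1 hO
  refine ⟨fun _ _ => rfl, hO, fun _ => !c i, ?_, fun B hB => ?_⟩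
  · dsimp only
    rw [hM.sol_interv_inr_eq_false_iff (by simp)]
    intro h
    refine (even_restZeroCount_update_not hi c).1 ?_ hc.even
    convert h.even using 3
    ext k
    by_cases hk : k = i <;> simp [Set.piecewise, hk]
  · rw [Finset.ssubset_singleton_iff.1 hB, hM.ac2At_iff_not_outputZero hO (by simp), not_not]
    convert hc using 2
    ext k
    simp [Set.piecewise]

end IsParityPixelModel

theorem rare_event_first_pixel_not_cause_general (n : ℕ)
    (M : CausalModel (Fin (2 * n + 1) → Bool) (Sum (Fin (2 * n + 1)) Unit) Bool)
    (hpix : ∀ (i : Fin (2 * n + 1)) (c : Fin (2 * n + 1) → Bool)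
        (g : Sum (Fin (2 * n + 1)) Unit → Bool), M.F (Sum.inl i) c g = c i)
    (hout : ∀ (c : Fin (2 * n + 1) → Bool) (g : Sum (Fin (2 * n + 1)) Unit → Bool),
      M.F (Sum.inr ()) c g =
        (if (g (Sum.inl 0) = false ∧ Even (restZeroCount fun i => g (Sum.inl i))) ∨
            (g (Sum.inl 0) = true ∧ Even (restZeroCount fun i => g (Sum.inl i)) ∧
              0 < restZeroCount fun i => g (Sum.inl i))
         then false else true))
    (c : Fin (2 * n + 1) → Bool)
    (hO : M.actVal c (Sum.inr ()) = false)
    (hz : 0 < restZeroCount fun i => M.actVal c (Sum.inl i)) :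
    (¬ ∃ (Y : Finset (Sum (Fin (2 * n + 1)) Unit))
        (y : Sum (Fin (2 * n + 1)) Unit → Bool),
        (∀ X ∈ Y, ∃ i : Fin (2 * n + 1), i ≠ 0 ∧ X = Sum.inl i) ∧
        Sum.inl 0 ∉ Y ∧
        IsActualCause M c (insert (Sum.inl 0) Y)
          (Function.update y (Sum.inl 0) false)
          (fun g => g (Sum.inr ()) = false)) ∧
    ¬ IsActualCause M c {Sum.inl 0} (fun _ => false)
        (fun g => g (Sum.inr ()) = false) ∧
    (∀ i : Fin (2 * n + 1), i ≠ 0 →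
      IsButForCause M c {Sum.inl i} (M.actVal c)
        (fun g => g (Sum.inr ()) = false)) := by
  have hM : IsParityPixelModel M :=
    ⟨hpix, fun c g => by rw [hout]; split_ifs with h <;> simpa [OutputZero] using h⟩
  simp only [hM.actVal_inl] at hz
  refine ⟨?_, hM.not_isActualCause_of_inl_zero_mem hO hz (by simp) (by simp) _,
    fun i hi => hM.isButForCause_inl hO hi⟩
  rintro ⟨Y, y, hY, -, hcause⟩
  refine hM.not_isActualCause_of_inl_zero_mem hO hz (fun h => ?_)
    (Finset.mem_insert_self _ _) _ hcause
  obtain ⟨i, -, hi⟩ := hY _ ((Finset.mem_insert.1 h).resolve_left (by simp))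
  exact Sum.inr_ne_inl hi

/-- The causal model with `2n+1` binary pixel variables `X₁, …, X_{2n+1}` (indexed by
`Sum.inl i` for `i : Fin (2n+1)`, with `X₁ = Sum.inl 0`) set directly by the exogenous
context (contexts are exactly the pixel assignments, so every pixel-value assignment is
realized), and an output variable `O = Sum.inr ()` whose equation gives `O = 0` iff
either `X₁ = 0` and the number of zeros among `X₂, …, X_{2n+1}` is even (possibly `0`),
or `X₁ = 1` and that number is even and positive (`false` playing the role of `0`).
For every context `c` in which `X₁ = 0`, `O = 0`, and the number of zeros among
`X₂, …, X_{2n+1}` is positive: there is no (possibly empty) conjunction `Y = y` of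
assignments to pixel variables other than `X₁` such that `X₁ = 0 ∧ Y = y` is an actual
cause of `O = 0` in `(M,c)`; in particular, `X₁ = 0` by itself is not an actual cause of
`O = 0` in `(M,c)`; and for any single pixel `Y` among `X₂, …, X_{2n+1}` with actual
value `y` in `c`, `Y = y` is an actual (but-for) cause of `O = 0` in `(M,c)`. -/
theorem rare_event_first_pixel_not_cause (n : ℕ)
    (M : CausalModel (Fin (2 * n + 1) → Bool) (Sum (Fin (2 * n + 1)) Unit) Bool)
    (hpix : ∀ (i : Fin (2 * n + 1)) (c : Fin (2 * n + 1) → Bool)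
        (g : Sum (Fin (2 * n + 1)) Unit → Bool), M.F (Sum.inl i) c g = c i)
    (hout : ∀ (c : Fin (2 * n + 1) → Bool) (g : Sum (Fin (2 * n + 1)) Unit → Bool),
      M.F (Sum.inr ()) c g =
        (if (g (Sum.inl 0) = false ∧ Even (restZeroCount fun i => g (Sum.inl i))) ∨
            (g (Sum.inl 0) = true ∧ Even (restZeroCount fun i => g (Sum.inl i)) ∧
              0 < restZeroCount fun i => g (Sum.inl i))
         then false else true))
    (c : Fin (2 * n + 1) → Bool)
    (hX₁ : M.actVal c (Sum.inl 0) = false)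
    (hO : M.actVal c (Sum.inr ()) = false)
    (hz : 0 < restZeroCount fun i => M.actVal c (Sum.inl i)) :
    (¬ ∃ (Y : Finset (Sum (Fin (2 * n + 1)) Unit))
        (y : Sum (Fin (2 * n + 1)) Unit → Bool),
        (∀ X ∈ Y, ∃ i : Fin (2 * n + 1), i ≠ 0 ∧ X = Sum.inl i) ∧
        Sum.inl 0 ∉ Y ∧
        IsActualCause M c (insert (Sum.inl 0) Y)
          (Function.update y (Sum.inl 0) false)
          (fun g => g (Sum.inr ()) = false)) ∧
    ¬ IsActualCause M c {Sum.inl 0} (fun _ => false)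
        (fun g => g (Sum.inr ()) = false) ∧
    (∀ i : Fin (2 * n + 1), i ≠ 0 →
      IsButForCause M c {Sum.inl i} (M.actVal c)
        (fun g => g (Sum.inr ()) = false)) :=
  rare_event_first_pixel_not_cause_general n M hpix hout c hO hz
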